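/- arXiv:math/0602169 — 9 statements merged into one kernel-verified Lean document; each statement's English description precedes it below -/
import Mathlib

section
/- Let E be a lattice-ordered effect algebra. Then E is an MV-effect algebra (i.e., (a ∨ b) ⊖ a = b ⊖ (a ∧ b) for all a, b) if and only if for all a, b ∈ E, a ∧ b = 0 implies a ≤ b'. -/
/-- An effect algebra: a partial algebra `(α; ⊕, 0, 1)`.  The partial operation is
encoded by a total function `add` together with a definedness predicate `D`. -/
structure EffectAlgebra (α : Type*) where
  D : α → α → Prop
  add : α → α → α
  zero : α
  one : α
  comm_def : ∀ a b, D a b → D b a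
  comm : ∀ a b, D a b → add a b = add b a
  assoc_def₁ : ∀ a b c, D a b → D (add a b) c → D b c
  assoc_def₂ : ∀ a b c, D a b → D (add a b) c → D a (add b c)
  assoc : ∀ a b c, D a b → D (add a b) c → add (add a b) c = add a (add b c)
  orth_exists : ∀ a, ∃! b, D a b ∧ add a b = one
  add_one : ∀ a, D a one → a = zero

namespace EffectAlgebra

variable {α : Type*}
open Classical

/-- The induced order: `a ≤ b` iff `∃ c, a ⊕ c = b`. -/
def le (E : EffectAlgebra α) (a b : α) : Prop := ∃ c, E.D a c ∧ E.add a c = b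

/-- The orthosupplement `a'`. -/
noncomputable def orth (E : EffectAlgebra α) (a : α) : α := (E.orth_exists a).choose

/-- Partial difference: `sub b a = b ⊖ a`, intended for `a ≤ b`. -/
noncomputable def sub (E : EffectAlgebra α) (b a : α) : α :=
  if h : ∃ c, E.D a c ∧ E.add a c = b then h.choose else E.zero

end EffectAlgebra

/-! With `c = a ∧ b`, `x = a ⊖ c` and `y = b ⊖ c`, every common lower bound `t` of `x` and `y`
satisfies `c ⊕ t ≤ a ∧ b = c`, so `x ∧ y = 0` and the hypothesis makes `x ⊕ y` defined.
If `a ⊕ y = b ⊕ x` with `x, y` disjoint, then any upper bound `s ≤ a ⊕ y` of `a` and `b` leaves a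
gap `(a ⊕ y) ⊖ s` below both `x` and `y`, hence zero; so this common value is the supremum. Applied
to `x, y` this gives `x ∨ y = x ⊕ y ≤ c'`, so `a ⊕ y = c ⊕ x ⊕ y = b ⊕ x` exists, and applied
to `a, b` it gives `a ∨ b = a ⊕ y`, i.e. `(a ∨ b) ⊖ a = y = b ⊖ (a ∧ b)`. Conversely, if
`a ∧ b = 0` the MV identity reads `(a ∨ b) ⊖ a = b`, so `a ⊕ b` is defined. -/

namespace EffectAlgebra

variable {α : Type*} (E : EffectAlgebra α)

def IsSup (a b s : α) : Prop :=
  E.le a s ∧ E.le b s ∧ ∀ c, E.le a c → E.le b c → E.le s c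

def IsInf (a b i : α) : Prop :=
  E.le i a ∧ E.le i b ∧ ∀ c, E.le c a → E.le c b → E.le c i

def Disjoint (x y : α) : Prop :=
  ∀ t, E.le t x → E.le t y → t = E.zero

lemma D_orth (a : α) : E.D a (E.orth a) := (E.orth_exists a).choose_spec.1.1

lemma add_orth (a : α) : E.add a (E.orth a) = E.one := (E.orth_exists a).choose_spec.1.2

lemma eq_orth_of_add_eq_one {a b : α} (hD : E.D a b) (h : E.add a b = E.one) :
    b = E.orth a :=
  (E.orth_exists a).choose_spec.2 b ⟨hD, h⟩

lemma D_orth_left (a : α) : E.D (E.orth a) a := E.comm_def _ _ (E.D_orth a)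

lemma orth_add (a : α) : E.add (E.orth a) a = E.one :=
  (E.comm _ _ (E.D_orth_left a)).trans (E.add_orth a)

lemma orth_orth (a : α) : E.orth (E.orth a) = a :=
  (E.eq_orth_of_add_eq_one (E.D_orth_left a) (E.orth_add a)).symm

lemma orth_one : E.orth E.one = E.zero :=
  E.add_one _ (E.D_orth_left E.one)

lemma D_one_zero : E.D E.one E.zero := by
  simpa only [orth_one] using E.D_orth E.one

lemma add_one_zero : E.add E.one E.zero = E.one := by
  simpa only [orth_one] using E.add_orth E.one

lemma D_zero (a : α) : E.D a E.zero :=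
  E.assoc_def₁ _ _ _ (E.D_orth_left a) (by rw [orth_add]; exact E.D_one_zero)

lemma add_zero (a : α) : E.add a E.zero = a := by
  have hD : E.D (E.add (E.orth a) a) E.zero := by rw [orth_add]; exact E.D_one_zero
  have h : E.add (E.orth a) (E.add a E.zero) = E.one := by
    rw [← E.assoc _ _ _ (E.D_orth_left a) hD, orth_add, add_one_zero]
  simpa only [orth_orth] using
    E.eq_orth_of_add_eq_one (E.assoc_def₂ _ _ _ (E.D_orth_left a) hD) h

lemma orth_eq_add_orth_add {a b : α} (h : E.D a b) :
    E.orth b = E.add a (E.orth (E.add a b)) := by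
  have hba : E.D b a := E.comm_def _ _ h
  have hbaD : E.D (E.add b a) (E.orth (E.add a b)) := by
    rw [E.comm b a hba]; exact E.D_orth _
  refine (E.eq_orth_of_add_eq_one (E.assoc_def₂ _ _ _ hba hbaD) ?_).symm
  rw [← E.assoc _ _ _ hba hbaD, E.comm b a hba, add_orth]

lemma add_left_cancel {a b c : α} (hb : E.D a b) (hc : E.D a c)
    (h : E.add a b = E.add a c) : b = c := by
  rw [← E.orth_orth b, ← E.orth_orth c, E.orth_eq_add_orth_add hb,
    E.orth_eq_add_orth_add hc, h]

lemma eq_zero_of_add_eq_zero_left {a b : α} (h : E.D a b) (h0 : E.add a b = E.zero) :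
    a = E.zero := by
  have hba : E.D b a := E.comm_def _ _ h
  refine E.add_one a (E.assoc_def₁ b a E.one hba ?_)
  rw [E.comm b a hba, h0]
  exact E.comm_def _ _ E.D_one_zero

lemma eq_zero_of_add_le {c t : α} (hct : E.D c t) (h : E.le (E.add c t) c) : t = E.zero := by
  obtain ⟨u, hu, hctu⟩ := h
  refine E.eq_zero_of_add_eq_zero_left (E.assoc_def₁ c t u hct hu) ?_
  refine E.add_left_cancel (E.assoc_def₂ c t u hct hu) (E.D_zero c) ?_
  rw [← E.assoc c t u hct hu, hctu, add_zero]

lemma assoc_symm {a b c : α} (hbc : E.D b c) (habc : E.D a (E.add b c)) :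
    E.D a b ∧ E.D (E.add a b) c ∧ E.add a (E.add b c) = E.add (E.add a b) c := by
  have hcb : E.D c b := E.comm_def _ _ hbc
  have hcba : E.D (E.add c b) a := by
    rw [E.comm c b hcb]; exact E.comm_def _ _ habc
  have hba : E.D b a := E.assoc_def₁ c b a hcb hcba
  have hcab : E.D c (E.add a b) := by
    rw [← E.comm b a hba]; exact E.assoc_def₂ c b a hcb hcba
  refine ⟨E.comm_def _ _ hba, E.comm_def _ _ hcab, ?_⟩
  calc E.add a (E.add b c) = E.add (E.add c b) a := by rw [E.comm a _ habc, E.comm b c hbc]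
    _ = E.add c (E.add a b) := by rw [E.assoc c b a hcb hcba, E.comm b a hba]
    _ = E.add (E.add a b) c := E.comm c _ hcab

lemma add_le_add_left {c x t : α} (hcx : E.D c x) (h : E.le t x) :
    E.D c t ∧ E.le (E.add c t) (E.add c x) := by
  obtain ⟨s, hts, rfl⟩ := h
  obtain ⟨hct, hcts, hassoc⟩ := E.assoc_symm hts hcx
  exact ⟨hct, s, hcts, hassoc.symm⟩

lemma sub_spec {a b : α} (h : E.le a b) : E.D a (E.sub b a) ∧ E.add a (E.sub b a) = b := by
  have h' : ∃ c, E.D a c ∧ E.add a c = b := h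
  rw [sub, dif_pos h']
  exact h'.choose_spec

lemma sub_eq {a b c : α} (hD : E.D a c) (h : E.add a c = b) : E.sub b a = c :=
  have hle : E.le a b := ⟨c, hD, h⟩
  E.add_left_cancel (E.sub_spec hle).1 hD ((E.sub_spec hle).2.trans h.symm)

lemma sub_zero (b : α) : E.sub b E.zero = b :=
  have hb : E.D b E.zero := E.D_zero b
  E.sub_eq (E.comm_def _ _ hb) ((E.comm _ _ (E.comm_def _ _ hb)).trans (E.add_zero b))

lemma D_of_le_orth {a b : α} (h : E.le a (E.orth b)) : E.D a b := by
  obtain ⟨c, hac, hacb⟩ := h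
  have hD : E.D (E.add c a) b := by
    rw [← E.comm a c hac, hacb]; exact E.D_orth_left b
  exact E.assoc_def₁ c a b (E.comm_def _ _ hac) hD

lemma le_orth_of_D {a b : α} (h : E.D a b) : E.le a (E.orth b) := by
  refine ⟨E.orth (E.add b a), ?_, ?_⟩
  · exact E.assoc_def₁ b a _ (E.comm_def _ _ h) (E.D_orth _)
  · rw [E.comm b a (E.comm_def _ _ h)]
    exact (E.orth_eq_add_orth_add h).symm

lemma le_of_le_of_add_eq_add {a v s y : α} (hav : E.le a v) (hvs : E.D v s) (hay : E.D a y)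
    (h : E.add v s = E.add a y) : E.le s y := by
  obtain ⟨p, hap, rfl⟩ := hav
  have hsp : E.D s p := E.comm_def _ _ (E.assoc_def₁ a p s hap hvs)
  refine ⟨p, hsp, ?_⟩
  rw [E.comm s p hsp]
  exact E.add_left_cancel (E.assoc_def₂ a p s hap hvs) hay ((E.assoc a p s hap hvs).symm.trans h)

lemma add_right_comm {c x y : α} (hxy : E.D x y) (hcxy : E.D c (E.add x y)) :
    E.D (E.add c x) y ∧ E.D (E.add c y) x ∧ E.add (E.add c x) y = E.add (E.add c y) x := by
  have hyx : E.D y x := E.comm_def _ _ hxy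
  have hcyx : E.D c (E.add y x) := by rw [← E.comm x y hxy]; exact hcxy
  obtain ⟨-, hcx_y, hassoc⟩ := E.assoc_symm hxy hcxy
  obtain ⟨-, hcy_x, hassoc'⟩ := E.assoc_symm hyx hcyx
  exact ⟨hcx_y, hcy_x, by rw [← hassoc, ← hassoc', E.comm x y hxy]⟩

lemma disjoint_sub_of_isInf {a b c : α} (hc : E.IsInf a b c) :
    E.Disjoint (E.sub a c) (E.sub b c) := by
  obtain ⟨hca, hcb, hmax⟩ := hc
  obtain ⟨hcx, hcxa⟩ := E.sub_spec hca
  obtain ⟨hcy, hcyb⟩ := E.sub_spec hcb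
  intro t htx hty
  obtain ⟨hct, hcta⟩ := E.add_le_add_left hcx htx
  have hctb := (E.add_le_add_left hcy hty).2
  rw [hcxa] at hcta
  rw [hcyb] at hctb
  exact E.eq_zero_of_add_le hct (hmax _ hcta hctb)

lemma eq_add_of_isSup_of_disjoint {x y a b s : α} (hxy : E.Disjoint x y) (hay : E.D a y)
    (hbx : E.D b x) (h : E.add a y = E.add b x) (hs : E.IsSup a b s) : s = E.add a y := by
  obtain ⟨has, hbs, hleast⟩ := hs
  have hse : E.le s (E.add a y) := hleast _ ⟨y, hay, rfl⟩ ⟨x, hbx, h.symm⟩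
  obtain ⟨hsr, hsre⟩ := E.sub_spec hse
  -- the gap between `s` and `a ⊕ y` lies below both `x` and `y`
  have hr0 : E.sub (E.add a y) s = E.zero :=
    hxy _ (E.le_of_le_of_add_eq_add hbs hsr hbx (hsre.trans h))
      (E.le_of_le_of_add_eq_add has hsr hay hsre)
  rwa [hr0, add_zero] at hsre

lemma le_orth_of_sub_eq {a b s : α} (has : E.le a s) (h : E.sub s a = b) : E.le a (E.orth b) :=
  h ▸ E.le_orth_of_D (E.sub_spec has).1

theorem sub_sup_eq_sub_inf (sup inf : α → α → α) (hsup : ∀ a b, E.IsSup a b (sup a b))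
    (hinf : ∀ a b, E.IsInf a b (inf a b)) (H : ∀ a b, inf a b = E.zero → E.le a (E.orth b))
    (a b : α) : E.sub (sup a b) a = E.sub b (inf a b) := by
  obtain ⟨hcx, hcxa⟩ := E.sub_spec (hinf a b).1
  obtain ⟨hcy, hcyb⟩ := E.sub_spec (hinf a b).2.1
  set c := inf a b
  set x := E.sub a c
  set y := E.sub b c
  have hdisj : E.Disjoint x y := E.disjoint_sub_of_isInf (hinf a b)
  have hxy : E.D x y := E.D_of_le_orth (H x y (hdisj _ (hinf x y).1 (hinf x y).2.1))
  have hsup_xy : sup x y = E.add x y :=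
    E.eq_add_of_isSup_of_disjoint hdisj hxy (E.comm_def _ _ hxy) (E.comm _ _ hxy) (hsup x y)
  have hcxy : E.D c (E.add x y) := by
    refine E.comm_def _ _ (E.D_of_le_orth (hsup_xy ▸ (hsup x y).2.2 _ ?_ ?_))
    exacts [E.le_orth_of_D (E.comm_def _ _ hcx), E.le_orth_of_D (E.comm_def _ _ hcy)]
  obtain ⟨hay, hbx, hab⟩ := E.add_right_comm hxy hcxy
  rw [hcxa] at hay hab
  rw [hcyb] at hbx hab
  exact E.sub_eq hay (E.eq_add_of_isSup_of_disjoint hdisj hay hbx hab (hsup a b)).symm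

end EffectAlgebra

/-- a lattice-ordered effect algebra is an MV-effect algebra iff
`a ∧ b = 0` implies `a ≤ b'`. -/
theorem stmt2 {α : Type*} (E : EffectAlgebra α) (sup inf : α → α → α)
    (hsup : ∀ a b : α, E.le a (sup a b) ∧ E.le b (sup a b) ∧
      ∀ c, E.le a c → E.le b c → E.le (sup a b) c)
    (hinf : ∀ a b : α, E.le (inf a b) a ∧ E.le (inf a b) b ∧
      ∀ c, E.le c a → E.le c b → E.le c (inf a b)) :
    (∀ a b : α, E.sub (sup a b) a = E.sub b (inf a b)) ↔
      (∀ a b : α, inf a b = E.zero → E.le a (E.orth b)) :=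
  ⟨fun hMV a b hab => E.le_orth_of_sub_eq (hsup a b).1 (by rw [hMV, hab, EffectAlgebra.sub_zero]),
    fun H => E.sub_sup_eq_sub_inf sup inf hsup hinf H⟩
end

section
/- Let B be a Boolean algebra and G a subgroup of Aut(B). The following are equivalent: (a) for all a, b ∈ B and f ∈ G with a ≤ b and f(a) ≤ b, there is h ∈ G with h(a) = f(a) and h(b) = b; (b) for all a, b ∈ B and f ∈ G with a ≤ b and a ≤ f(b), there is h ∈ G with h(b) = f(b) and h(a) = a; (c) for all a, b ∈ B and f ∈ G with a ∧ b = 0 and a ∧ f(b) = 0, there is h ∈ G with h(b) = f(b) and h(a) = a. -/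
section BGpair

variable {α : Type*} [BooleanAlgebra α]

/-- `L(a,b) = {a ∧ f(b) : f ∈ G}`. -/
def Lset (G : Subgroup (α ≃o α)) (a b : α) : Set α := {x | ∃ f ∈ G, x = a ⊓ f b}

/-- `L⁺(a,b) = {g(a) ∧ f(b) : f, g ∈ G}`. -/
def Lplus (G : Subgroup (α ≃o α)) (a b : α) : Set α :=
  {x | ∃ f ∈ G, ∃ g ∈ G, x = g a ⊓ f b}

/-- Condition (MVP1). -/
def MVP1 (G : Subgroup (α ≃o α)) : Prop :=
  ∀ (a b : α) (f : α ≃o α), f ∈ G → a ≤ b → f a ≤ b →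
    ∃ h ∈ G, h a = f a ∧ h b = b

/-- Condition (MVP2): every element of `L(a,b)` lies below a maximal element of `L(a,b)`. -/
def MVP2 (G : Subgroup (α ≃o α)) : Prop :=
  ∀ (a b x : α), x ∈ Lset G a b →
    ∃ m ∈ Lset G a b, x ≤ m ∧ ∀ y ∈ Lset G a b, m ≤ y → y = m

/-- The equivalence `a ∼_G b` iff `f(a) = b` for some `f ∈ G`. -/
def rG (G : Subgroup (α ≃o α)) (a b : α) : Prop := ∃ f ∈ G, f a = b

end BGpair


section Stmt7Aux

variable {α : Type*} [BooleanAlgebra α]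

lemma orderIso_map_compl (f : α ≃o α) (x : α) : f xᶜ = (f x)ᶜ := by
  refine (IsCompl.compl_eq ?_).symm
  rw [isCompl_iff]
  constructor
  · rw [disjoint_iff, ← f.map_inf, inf_compl_eq_bot, f.map_bot]
  · rw [codisjoint_iff, ← f.map_sup, sup_compl_eq_top, f.map_top]

lemma mvp_a_to_b (G : Subgroup (α ≃o α))
    (ha : ∀ (a b : α) (f : α ≃o α), f ∈ G → a ≤ b → f a ≤ b →
        ∃ h ∈ G, h a = f a ∧ h b = b) :
    ∀ (a b : α) (f : α ≃o α), f ∈ G → a ≤ b → a ≤ f b →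
        ∃ h ∈ G, h b = f b ∧ h a = a := by
  intro a b f hf hab hafb
  have h1 : f (f⁻¹ a) ≤ b := by
    have : f (f⁻¹ a) = a := f.apply_symm_apply a
    rw [this]; exact hab
  have h2 : f⁻¹ a ≤ b := by
    have := f.symm.monotone hafb
    simp at this; exact this
  obtain ⟨h, hG, hha, hhb⟩ := ha (f⁻¹ a) b f hf h2 h1
  refine ⟨f * h⁻¹, G.mul_mem hf (G.inv_mem hG), ?_, ?_⟩
  · show f (h⁻¹ b) = f b
    congr 1
    have : h⁻¹ (h b) = h⁻¹ b := by rw [hhb]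
    simpa using this.symm
  · show f (h⁻¹ a) = a
    have : h⁻¹ (h (f⁻¹ a)) = h⁻¹ a := by rw [hha]; simp [f.apply_symm_apply]
    simp only [show ∀ x, h⁻¹ (h x) = x from fun x => h.symm_apply_apply x] at this
    rw [← this]; exact f.apply_symm_apply a

lemma mvp_b_to_a (G : Subgroup (α ≃o α))
    (hb : ∀ (a b : α) (f : α ≃o α), f ∈ G → a ≤ b → a ≤ f b →
        ∃ h ∈ G, h b = f b ∧ h a = a) :
    ∀ (a b : α) (f : α ≃o α), f ∈ G → a ≤ b → f a ≤ b →
        ∃ h ∈ G, h a = f a ∧ h b = b := by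
  intro a b f hf hab hfab
  obtain ⟨h, hG, hhb, hha⟩ := hb (f a) b f hf hfab (f.monotone hab)
  refine ⟨h⁻¹ * f, G.mul_mem (G.inv_mem hG) hf, ?_, ?_⟩
  · show h⁻¹ (f a) = f a
    have : h⁻¹ (h (f a)) = h⁻¹ (f a) := by rw [hha]
    simpa using this.symm
  · show h⁻¹ (f b) = b
    rw [← hhb]; exact h.symm_apply_apply b

lemma mvp_a_to_c (G : Subgroup (α ≃o α))
    (ha : ∀ (a b : α) (f : α ≃o α), f ∈ G → a ≤ b → f a ≤ b →
        ∃ h ∈ G, h a = f a ∧ h b = b) :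
    ∀ (a b : α) (f : α ≃o α), f ∈ G → a ⊓ b = ⊥ → a ⊓ f b = ⊥ →
        ∃ h ∈ G, h b = f b ∧ h a = a := by
  intro a b f hf h1 h2
  have hb1 : b ≤ aᶜ := le_compl_iff_disjoint_left.mpr (disjoint_iff.mpr h1)
  have hb2 : f b ≤ aᶜ := le_compl_iff_disjoint_left.mpr (disjoint_iff.mpr h2)
  obtain ⟨h, hG, hhb, hhc⟩ := ha b aᶜ f hf hb1 hb2
  refine ⟨h, hG, hhb, ?_⟩
  have : h aᶜ = (h a)ᶜ := orderIso_map_compl h a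
  rw [this] at hhc
  exact compl_injective hhc

lemma mvp_c_to_a (G : Subgroup (α ≃o α))
    (hc : ∀ (a b : α) (f : α ≃o α), f ∈ G → a ⊓ b = ⊥ → a ⊓ f b = ⊥ →
        ∃ h ∈ G, h b = f b ∧ h a = a) :
    ∀ (a b : α) (f : α ≃o α), f ∈ G → a ≤ b → f a ≤ b →
        ∃ h ∈ G, h a = f a ∧ h b = b := by
  intro a b f hf hab hfab
  have h1 : bᶜ ⊓ a = ⊥ := by
    rw [← disjoint_iff]
    exact (disjoint_compl_left_iff.mpr hab)
  have h2 : bᶜ ⊓ f a = ⊥ := by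
    rw [← disjoint_iff]
    exact (disjoint_compl_left_iff.mpr hfab)
  obtain ⟨h, hG, hha, hhc⟩ := hc bᶜ a f hf h1 h2
  refine ⟨h, hG, hha, ?_⟩
  have : h bᶜ = (h b)ᶜ := orderIso_map_compl h b
  rw [this] at hhc
  exact compl_injective hhc

end Stmt7Aux

/-- three equivalent formulations of (MVP1). -/
theorem stmt7 {α : Type*} [BooleanAlgebra α] (G : Subgroup (α ≃o α)) :
    ((∀ (a b : α) (f : α ≃o α), f ∈ G → a ≤ b → f a ≤ b →
        ∃ h ∈ G, h a = f a ∧ h b = b) ↔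
      (∀ (a b : α) (f : α ≃o α), f ∈ G → a ≤ b → a ≤ f b →
        ∃ h ∈ G, h b = f b ∧ h a = a)) ∧
    ((∀ (a b : α) (f : α ≃o α), f ∈ G → a ≤ b → a ≤ f b →
        ∃ h ∈ G, h b = f b ∧ h a = a) ↔
      (∀ (a b : α) (f : α ≃o α), f ∈ G → a ⊓ b = ⊥ → a ⊓ f b = ⊥ →
        ∃ h ∈ G, h b = f b ∧ h a = a)) := by
  constructor
  · exact ⟨mvp_a_to_b G, mvp_b_to_a G⟩
  · constructor
    · intro hb; exact mvp_a_to_c G (mvp_b_to_a G hb)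
    · intro hc; exact mvp_a_to_b G (mvp_c_to_a G hc)
end

section
/- Let (B, G) be an MV-pair, let a, b ∈ B, and let m be a maximal element of L(a,b) = {a ∧ f(b) : f ∈ G}. Then for every f ∈ G, f(m) is a maximal element of L⁺(a,b) = {g(a) ∧ f(b) : f, g ∈ G}. -/
/-! If `m ∈ L(a,b)` is maximal and `f m ≤ g a ⊓ h b`, pull back by `g` to get
`(g⁻¹ f) m ≤ a ⊓ (g⁻¹ h) b ∈ L(a,b)`. Both `m` and `(g⁻¹ f) m` lie below `a`, so (MVP1) replaces
`g⁻¹ f` by some `k ∈ G` fixing `a`. Since `k⁻¹` fixes `a`, it preserves `L(a,b)`, and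
maximality of `m` forces `k⁻¹ (a ⊓ (g⁻¹ h) b) = m`. -/

section MVPair

variable {α : Type*} [BooleanAlgebra α] {G : Subgroup (α ≃o α)} {a b : α}

theorem le_of_mem_Lset {x : α} (hx : x ∈ Lset G a b) : x ≤ a := by
  obtain ⟨f, -, rfl⟩ := hx
  exact inf_le_left

theorem map_mem_Lset_of_map_eq {k : α ≃o α} (hk : k ∈ G) (hka : k a = a) {x : α}
    (hx : x ∈ Lset G a b) : k x ∈ Lset G a b := by
  obtain ⟨f, hf, rfl⟩ := hx
  exact ⟨k * f, mul_mem hk hf, by rw [map_inf, hka]; rfl⟩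

theorem map_mem_Lplus {g : α ≃o α} (hg : g ∈ G) {x : α} (hx : x ∈ Lset G a b) :
    g x ∈ Lplus G a b := by
  obtain ⟨f, hf, rfl⟩ := hx
  exact ⟨g * f, mul_mem hg hf, g, hg, by rw [map_inf]; rfl⟩

theorem exists_map_eq_of_mem_Lplus {y : α} (hy : y ∈ Lplus G a b) :
    ∃ g ∈ G, ∃ x ∈ Lset G a b, y = g x := by
  obtain ⟨f, hf, g, hg, rfl⟩ := hy
  refine ⟨g, hg, g⁻¹ (g a ⊓ f b), ⟨g⁻¹ * f, mul_mem (inv_mem hg) hf, ?_⟩, ?_⟩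
  · rw [map_inf]
    simp
  · simp

theorem eq_map_of_map_le_of_maximal (h1 : MVP1 G) {m : α} (hm : m ∈ Lset G a b)
    (hmax : ∀ y ∈ Lset G a b, m ≤ y → y = m) {f : α ≃o α} (hf : f ∈ G) {x : α}
    (hx : x ∈ Lset G a b) (hfx : f m ≤ x) : x = f m := by
  obtain ⟨k, hk, hkm, hka⟩ :=
    h1 m a f hf (le_of_mem_Lset hm) (hfx.trans (le_of_mem_Lset hx))
  have hk_inv_a : k⁻¹ a = a := by
    nth_rewrite 1 [← hka]
    simp
  have hm_le : m ≤ k⁻¹ x := by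
    rw [← hkm] at hfx
    simpa using (k⁻¹).monotone hfx
  have hx_eq : k⁻¹ x = m := hmax _ (map_mem_Lset_of_map_eq (inv_mem hk) hk_inv_a hx) hm_le
  rw [← hkm, ← hx_eq]
  simp

end MVPair

theorem stmt8_general {α : Type*} [BooleanAlgebra α] (G : Subgroup (α ≃o α))
    (h1 : MVP1 G) (a b m : α)
    (hm : m ∈ Lset G a b) (hmax : ∀ y ∈ Lset G a b, m ≤ y → y = m)
    (f : α ≃o α) (hf : f ∈ G) :
    f m ∈ Lplus G a b ∧ ∀ y ∈ Lplus G a b, f m ≤ y → y = f m := by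
  refine ⟨map_mem_Lplus hf hm, ?_⟩
  rintro y hy hfy
  obtain ⟨g, hg, x, hx, rfl⟩ := exists_map_eq_of_mem_Lplus hy
  have hgfx : (g⁻¹ * f) m ≤ x := by simpa using (g⁻¹).monotone hfy
  have hx_eq := eq_map_of_map_le_of_maximal h1 hm hmax (mul_mem (inv_mem hg) hf) hx hgfx
  rw [hx_eq]
  simp

/-- in an MV-pair, images under `G` of maximal elements of `L(a,b)` are
maximal in `L⁺(a,b)`. -/
theorem stmt8 {α : Type*} [BooleanAlgebra α] (G : Subgroup (α ≃o α))
    (h1 : MVP1 G) (h2 : MVP2 G) (a b m : α)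
    (hm : m ∈ Lset G a b) (hmax : ∀ y ∈ Lset G a b, m ≤ y → y = m)
    (f : α ≃o α) (hf : f ∈ G) :
    f m ∈ Lplus G a b ∧ ∀ y ∈ Lplus G a b, f m ≤ y → y = f m :=
  stmt8_general G h1 a b m hm hmax f hf
end

section
/- Let (B, G) be an MV-pair. Then every element of L⁺(a,b) = {g(a) ∧ f(b) : f, g ∈ G} lies below a maximal element of L⁺(a,b). -/
/-!
Pulling `g a ⊓ f b` back by `g⁻¹` lands in `L(a,b)`, where (MVP2) provides a maximal element
`m` above it; `g m` is then the candidate. The point is that a maximal element `m` of `L(a,b)`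
stays maximal in the larger set `L⁺(a,b)`: if `m ≤ g' a ⊓ f' b`, then (MVP1) applied to
`m ≤ a` and `g'⁻¹ m ≤ a` yields `k ∈ G` fixing `m` and sending `g' a` to `a`, so `k` moves
`g' a ⊓ f' b` into `L(a,b)` while keeping it above `m`. Finally `L⁺(a,b)` is `G`-invariant, and
maximality in a `G`-invariant set is preserved by `G`.
-/

theorem Maximal.orderIso_apply {β : Type*} [Preorder β] {P : β → Prop} {x : β} (e : β ≃o β)
    (hP : ∀ y, P (e y) ↔ P y) (hx : Maximal P x) : Maximal P (e x) := by
  refine ⟨(hP x).2 hx.prop, fun y hy hxy => ?_⟩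
  have hy' : P (e.symm y) := (hP _).1 (by simpa using hy)
  exact e.symm_apply_le.1 (hx.2 hy' (e.le_symm_apply.2 hxy))

section BGpair

variable {α : Type*} [BooleanAlgebra α] {G : Subgroup (α ≃o α)} {a b : α}

theorem Lset_subset_Lplus : Lset G a b ⊆ Lplus G a b := by
  rintro x ⟨f, hf, rfl⟩
  exact ⟨f, hf, 1, one_mem G, rfl⟩

theorem apply_mem_Lplus {g : α ≃o α} (hg : g ∈ G) {x : α} (hx : x ∈ Lplus G a b) :
    g x ∈ Lplus G a b := by
  obtain ⟨f, hf, g', hg', rfl⟩ := hx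
  exact ⟨g * f, mul_mem hg hf, g * g', mul_mem hg hg', map_inf g _ _⟩

theorem apply_mem_Lplus_iff {g : α ≃o α} (hg : g ∈ G) {x : α} :
    g x ∈ Lplus G a b ↔ x ∈ Lplus G a b :=
  ⟨fun h => by simpa using apply_mem_Lplus (inv_mem hg) h, apply_mem_Lplus hg⟩

theorem exists_apply_eq_of_mem_Lplus {x : α} (hx : x ∈ Lplus G a b) :
    ∃ g ∈ G, ∃ y ∈ Lset G a b, g y = x := by
  obtain ⟨f, hf, g, hg, rfl⟩ := hx
  refine ⟨g, hg, a ⊓ (g⁻¹ * f) b, ⟨g⁻¹ * f, mul_mem (inv_mem hg) hf, rfl⟩, ?_⟩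
  simp

theorem MVP1.exists_fix_and_apply_eq (h1 : MVP1 G) {m : α} {g : α ≃o α} (hg : g ∈ G)
    (hma : m ≤ a) (hmg : m ≤ g a) : ∃ k ∈ G, k m = m ∧ k (g a) = a := by
  obtain ⟨h, hh, hhm, hha⟩ := h1 m a g⁻¹ (inv_mem hg) hma (by simpa using g⁻¹.monotone hmg)
  refine ⟨h⁻¹ * g⁻¹, mul_mem (inv_mem hh) (inv_mem hg), ?_, ?_⟩
  · simp [← hhm]
  · simpa using (congrArg (h⁻¹ : α ≃o α) hha).symm

theorem MVP1.maximal_Lplus_of_maximal_Lset (h1 : MVP1 G) {m : α}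
    (hm : Maximal (· ∈ Lset G a b) m) : Maximal (· ∈ Lplus G a b) m := by
  refine ⟨Lset_subset_Lplus hm.prop, ?_⟩
  rintro _ ⟨f, hf, g, hg, rfl⟩ hle
  have hma : m ≤ a := by
    obtain ⟨f₀, -, hm₀⟩ := hm.prop
    exact hm₀ ▸ inf_le_left
  obtain ⟨k, hk, hkm, hka⟩ := h1.exists_fix_and_apply_eq hg hma (hle.trans inf_le_left)
  have hky : k (g a ⊓ f b) = a ⊓ (k * f) b := by rw [map_inf, hka]; rfl
  have hmem : a ⊓ (k * f) b ∈ Lset G a b := ⟨k * f, mul_mem hk hf, rfl⟩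
  have hmk : m ≤ a ⊓ (k * f) b := hky ▸ hkm ▸ k.monotone hle
  have hk_eq : k (g a ⊓ f b) = k m := by rw [hky, hkm, hm.eq_of_le hmem hmk]
  exact (k.injective hk_eq).le

end BGpair

/-- in an MV-pair, every element of `L⁺(a,b)` lies below a maximal element
of `L⁺(a,b)`. -/
theorem stmt9 {α : Type*} [BooleanAlgebra α] (G : Subgroup (α ≃o α))
    (h1 : MVP1 G) (h2 : MVP2 G) (a b : α) :
    ∀ x ∈ Lplus G a b, ∃ m ∈ Lplus G a b, x ≤ m ∧ ∀ y ∈ Lplus G a b, m ≤ y → y = m := by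
  intro x hx
  obtain ⟨g, hg, y, hy, rfl⟩ := exists_apply_eq_of_mem_Lplus hx
  obtain ⟨m, hm, hym, hmax⟩ := h2 a b y hy
  have hm_max : Maximal (· ∈ Lset G a b) m :=
    maximal_iff.2 ⟨hm, fun z hz hmz => (hmax z hz hmz).symm⟩
  have hgm_max : Maximal (· ∈ Lplus G a b) (g m) :=
    (h1.maximal_Lplus_of_maximal_Lset hm_max).orderIso_apply g fun _ => apply_mem_Lplus_iff hg
  exact ⟨g m, hgm_max.prop, g.monotone hym, fun z hz hmz => (hgm_max.eq_of_le hz hmz).symm⟩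
end

section
/- Let B be a Boolean algebra and G a subgroup of Aut(B) satisfying (MVP1). Define a ∼_G b iff there is f ∈ G with f(a) = b. Then ∼_G is an effect algebra congruence on B (viewed as an effect algebra where a ⊕ b is the join a ∨ b defined only when a ∧ b = 0). -/
/-
Automorphisms preserve `⊓`, `⊔`, `⊥` and complements, which gives (C5) and (C6) directly. For (C2),
after moving `a₁ ⊔ b₁` by the automorphism relating `b₁` to `b₂`, it remains to replace `x` by
`y = φ x` in `x ⊔ c`, where both are disjoint from `c`. Both `x` and `φ x` lie below `cᶜ`, so (MVP1)
provides `h ∈ G` agreeing with `φ` on `x` and fixing `cᶜ`, hence `c`; then `h (x ⊔ c) = φ x ⊔ c`.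
-/

namespace rG

variable {α : Type*} [BooleanAlgebra α] {G : Subgroup (α ≃o α)}

theorem equivalence (G : Subgroup (α ≃o α)) : Equivalence (rG G) where
  refl _ := ⟨1, G.one_mem, rfl⟩
  symm := by
    rintro a _ ⟨f, hf, rfl⟩
    exact ⟨f⁻¹, G.inv_mem hf, f.symm_apply_apply a⟩
  trans := by
    rintro _ _ _ ⟨f, hf, rfl⟩ ⟨g, hg, rfl⟩
    exact ⟨g * f, G.mul_mem hg hf, rfl⟩

theorem of_mem {f : α ≃o α} (hf : f ∈ G) (a : α) : rG G a (f a) := ⟨f, hf, rfl⟩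

theorem compl {a b : α} : rG G a b → rG G aᶜ bᶜ := by
  rintro ⟨f, hf, rfl⟩
  exact ⟨f, hf, map_compl' f a⟩

theorem exists_sup_eq_of_sup {a b c : α} (hbc : b ⊓ c = ⊥) (h : rG G a (b ⊔ c)) :
    ∃ b₁ c₁ : α, rG G b₁ b ∧ rG G c₁ c ∧ b₁ ⊓ c₁ = ⊥ ∧ a = b₁ ⊔ c₁ := by
  obtain ⟨f, hf, hfa⟩ := h
  refine ⟨f.symm b, f.symm c, ⟨f, hf, f.apply_symm_apply b⟩, ⟨f, hf, f.apply_symm_apply c⟩,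
    ?_, ?_⟩
  · rw [← map_inf, hbc, map_bot]
  · rw [← map_sup, ← hfa, f.symm_apply_apply]

theorem sup_right_of_inf_eq_bot (hG : MVP1 G) {x y c : α} (hxy : rG G x y) (hx : x ⊓ c = ⊥)
    (hy : y ⊓ c = ⊥) : rG G (x ⊔ c) (y ⊔ c) := by
  obtain ⟨φ, hφ, rfl⟩ := hxy
  obtain ⟨h, hh, hhx, hhc'⟩ := hG x cᶜ φ hφ (le_compl_iff_disjoint_right.2 (disjoint_iff.2 hx))
    (le_compl_iff_disjoint_right.2 (disjoint_iff.2 hy))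
  have hhc : h c = c := by rw [← compl_compl c, map_compl', hhc']
  exact ⟨h, hh, by rw [map_sup, hhx, hhc]⟩

theorem sup_of_inf_eq_bot (hG : MVP1 G) {a₁ a₂ b₁ b₂ : α} (ha : rG G a₁ a₂) (hb : rG G b₁ b₂)
    (hab₁ : a₁ ⊓ b₁ = ⊥) (hab₂ : a₂ ⊓ b₂ = ⊥) : rG G (a₁ ⊔ b₁) (a₂ ⊔ b₂) := by
  obtain ⟨g, hg, rfl⟩ := hb
  have hmove : rG G (a₁ ⊔ b₁) (g a₁ ⊔ g b₁) := ⟨g, hg, map_sup g a₁ b₁⟩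
  have hga₁ : rG G (g a₁) a₂ := (equivalence G).trans ((equivalence G).symm (of_mem hg a₁)) ha
  have hdisj : g a₁ ⊓ g b₁ = ⊥ := by rw [← map_inf, hab₁, map_bot]
  exact (equivalence G).trans hmove (sup_right_of_inf_eq_bot hG hga₁ hdisj hab₂)

end rG

/-- if `(B,G)` satisfies (MVP1), then `∼_G` is an effect algebra congruence
on the Boolean algebra `B` viewed as an effect algebra (`a ⊕ b = a ⊔ b` defined iff
`a ⊓ b = ⊥`): it is an equivalence relation satisfying (C2), (C5) and (C6). -/
theorem stmt10 {α : Type*} [BooleanAlgebra α] (G : Subgroup (α ≃o α))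
    (h1 : MVP1 G) :
    Equivalence (rG G) ∧
    -- (C2)
    (∀ a₁ a₂ b₁ b₂ : α, rG G a₁ a₂ → rG G b₁ b₂ → a₁ ⊓ b₁ = ⊥ → a₂ ⊓ b₂ = ⊥ →
      rG G (a₁ ⊔ b₁) (a₂ ⊔ b₂)) ∧
    -- (C5)
    (∀ a b c : α, b ⊓ c = ⊥ → rG G a (b ⊔ c) →
      ∃ b₁ c₁ : α, rG G b₁ b ∧ rG G c₁ c ∧ b₁ ⊓ c₁ = ⊥ ∧ a = b₁ ⊔ c₁) ∧
    -- (C6)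
    (∀ a b : α, rG G a b → rG G aᶜ bᶜ) :=
  ⟨rG.equivalence G, fun _ _ _ _ => rG.sup_of_inf_eq_bot h1, fun _ _ _ => rG.exists_sup_eq_of_sup,
    fun _ _ => rG.compl⟩
end

section
/- For every finite Boolean algebra B, the pair (B, Aut(B)) is an MV-pair. -/
section AuxStmt14

attribute [local instance] Classical.propDecidable

/-- Extend a cardinality equality of finsets to a permutation mapping one into the other
and fixing everything outside the union. -/
private lemma exists_perm_aux {β : Type*} [DecidableEq β] :
    ∀ (n : ℕ) (s t : Finset β), (s \ t).card = n → s.card = t.card →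
      ∃ σ : Equiv.Perm β, (∀ x ∈ s, σ x ∈ t) ∧ ∀ x, x ∉ s → x ∉ t → σ x = x := by
  intro n
  induction n using Nat.strong_induction_on with
  | _ n ih =>
    intro s t hn hst
    rcases Finset.eq_empty_or_nonempty (s \ t) with hd | ⟨x, hx⟩
    · have hsub : s ⊆ t := by rwa [Finset.sdiff_eq_empty_iff_subset] at hd
      exact ⟨1, fun z hz => hsub hz, fun _ _ _ => rfl⟩
    · have hts : (t \ s).Nonempty := by
        rw [← Finset.card_pos, ← Finset.card_sdiff_comm hst, Finset.card_pos]
        exact ⟨x, hx⟩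
      obtain ⟨y, hy⟩ := hts
      have hxs : x ∈ s := (Finset.mem_sdiff.1 hx).1
      have hxt : x ∉ t := (Finset.mem_sdiff.1 hx).2
      have hyt : y ∈ t := (Finset.mem_sdiff.1 hy).1
      have hys : y ∉ s := (Finset.mem_sdiff.1 hy).2
      set s₁ := insert y (s.erase x) with hs₁
      have hcard : s₁.card = t.card := by
        rw [hs₁, Finset.card_insert_of_notMem (fun h => hys (Finset.mem_of_mem_erase h)),
          Finset.card_erase_of_mem hxs, ← hst,
          Nat.sub_add_cancel (Finset.card_pos.2 ⟨x, hxs⟩)]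
      have hsd : s₁ \ t = (s \ t).erase x := by
        ext z
        simp only [hs₁, Finset.mem_sdiff, Finset.mem_insert, Finset.mem_erase]
        constructor
        · rintro ⟨(rfl | ⟨hzx, hzs⟩), hzt⟩
          · exact absurd hyt hzt
          · exact ⟨hzx, hzs, hzt⟩
        · rintro ⟨hzx, hzs, hzt⟩
          exact ⟨Or.inr ⟨hzx, hzs⟩, hzt⟩
      have hlt : (s₁ \ t).card < n := by
        rw [hsd, Finset.card_erase_of_mem hx, hn]
        have : 0 < n := by
          rw [← hn]; exact Finset.card_pos.2 ⟨x, hx⟩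
        omega
      obtain ⟨σ', h1, h2⟩ := ih _ hlt s₁ t rfl hcard
      refine ⟨(Equiv.swap x y).trans σ', fun z hz => ?_, fun z hzs hzt => ?_⟩
      · simp only [Equiv.trans_apply]
        rcases eq_or_ne z x with rfl | hzx
        · rw [Equiv.swap_apply_left]
          exact h1 y (Finset.mem_insert_self _ _)
        · have hzy : z ≠ y := fun h => hys (h ▸ hz)
          rw [Equiv.swap_apply_of_ne_of_ne hzx hzy]
          exact h1 z (Finset.mem_insert_of_mem (Finset.mem_erase.2 ⟨hzx, hz⟩))
      · have hzx : z ≠ x := fun h => hzs (h ▸ hxs)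
        have hzy : z ≠ y := fun h => hzt (h ▸ hyt)
        simp only [Equiv.trans_apply, Equiv.swap_apply_of_ne_of_ne hzx hzy]
        refine h2 z (fun h => ?_) hzt
        rcases Finset.mem_insert.1 h with rfl | h
        · exact hzy rfl
        · exact hzs (Finset.mem_of_mem_erase h)

variable {α : Type*} [BooleanAlgebra α] [Fintype α]

private lemma atom_le_sup' {p x y : α} (hp : IsAtom p) (h : p ≤ x ⊔ y) : p ≤ x ∨ p ≤ y := by
  by_cases h1 : p ≤ x
  · exact Or.inl h1
  · have hlt : p ⊓ x < p := inf_le_left.lt_of_ne (fun hh => h1 (inf_eq_left.1 hh))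
    have hb : p ⊓ x = ⊥ := hp.2 _ hlt
    have : p = p ⊓ y := by
      have h0 : p = p ⊓ (x ⊔ y) := (inf_eq_left.2 h).symm
      rw [h0, inf_sup_left, hb, bot_sup_eq]
      simp [inf_assoc]
    exact Or.inr (by rw [this]; exact inf_le_right)

private lemma le_iff_atoms' (x y : α) : x ≤ y ↔ ∀ p : α, IsAtom p → p ≤ x → p ≤ y := by
  constructor
  · exact fun h p _ hp => hp.trans h
  · intro h
    by_contra hxy
    have hne : x \ y ≠ ⊥ := fun hb => hxy (sdiff_eq_bot_iff.1 hb)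
    obtain ⟨p, hp, hple⟩ := (eq_bot_or_exists_atom_le (x \ y)).resolve_left hne
    have h1 : p ≤ x := hple.trans sdiff_le
    have h2 : p ≤ yᶜ := hple.trans (by rw [sdiff_eq]; exact inf_le_right)
    have h3 : p ≤ y := h p hp h1
    have : p ≤ y ⊓ yᶜ := le_inf h3 h2
    rw [inf_compl_eq_bot] at this
    exact hp.1 (le_bot_iff.1 this)

private lemma eq_of_atoms' {x y : α}
    (h : ∀ q : {p : α // IsAtom p}, (q : α) ≤ x ↔ (q : α) ≤ y) : x = y :=
  le_antisymm ((le_iff_atoms' x y).2 fun p hp hx => (h ⟨p, hp⟩).1 hx)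
    ((le_iff_atoms' y x).2 fun p hp hx => (h ⟨p, hp⟩).2 hx)

private lemma atom_le_atom_iff' {p q : α} (hp : IsAtom p) (hq : IsAtom q) :
    p ≤ q ↔ p = q := by
  constructor
  · intro h
    rcases hq.le_iff.1 h with h | h
    · exact absurd h hp.1
    · exact h
  · rintro rfl; exact le_rfl

private lemma isAtom_supPrime {p : α} (hp : IsAtom p) : SupPrime p :=
  ⟨fun h => hp.1 (le_bot_iff.1 (h bot_le)), fun {_ _} h => atom_le_sup' hp h⟩

private noncomputable def atomsBelow (x : α) : Finset {p : α // IsAtom p} :=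
  Finset.univ.filter (fun p => (p : α) ≤ x)

private lemma mem_atomsBelow {x : α} {p : {p : α // IsAtom p}} :
    p ∈ atomsBelow x ↔ (p : α) ≤ x := by
  simp [atomsBelow]

private noncomputable def hFun (σ : Equiv.Perm {p : α // IsAtom p}) (x : α) : α :=
  (atomsBelow x).sup (fun p => ((σ p : {p : α // IsAtom p}) : α))

private lemma atom_le_hFun (σ : Equiv.Perm {p : α // IsAtom p})
    (q : {p : α // IsAtom p}) (x : α) :
    (q : α) ≤ hFun σ x ↔ ((σ⁻¹ q : {p : α // IsAtom p}) : α) ≤ x := by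
  rw [hFun, (isAtom_supPrime q.2).le_finset_sup]
  constructor
  · rintro ⟨p, hp, hle⟩
    have hq : q = σ p := Subtype.ext ((atom_le_atom_iff' q.2 (σ p).2).1 hle)
    rw [hq, (show ∀ y, σ⁻¹ (σ y) = y from σ.symm_apply_apply)]
    exact mem_atomsBelow.1 hp
  · intro h
    exact ⟨σ⁻¹ q, mem_atomsBelow.2 h, by rw [(show ∀ y, σ (σ⁻¹ y) = y from σ.apply_symm_apply)]⟩

private lemma hFun_mono (σ : Equiv.Perm {p : α // IsAtom p}) {x y : α} (h : x ≤ y) :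
    hFun σ x ≤ hFun σ y := by
  apply Finset.sup_mono
  intro p hp
  exact mem_atomsBelow.2 ((mem_atomsBelow.1 hp).trans h)

private noncomputable def permIso (σ : Equiv.Perm {p : α // IsAtom p}) : α ≃o α where
  toFun := hFun σ
  invFun := hFun σ⁻¹
  left_inv := fun x => eq_of_atoms' fun q => by
    rw [atom_le_hFun, atom_le_hFun]
    simp
  right_inv := fun x => eq_of_atoms' fun q => by
    rw [atom_le_hFun, atom_le_hFun]
    simp
  map_rel_iff' := by
    intro x y
    constructor
    · intro h
      refine (le_iff_atoms' x y).2 fun p hp hpx => ?_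
      have h1 : ((σ ⟨p, hp⟩ : {p : α // IsAtom p}) : α) ≤ hFun σ x :=
        (atom_le_hFun σ (σ ⟨p, hp⟩) x).2 (by simpa)
      have h2 := h1.trans h
      simpa using (atom_le_hFun σ (σ ⟨p, hp⟩) y).1 h2
    · exact fun h => hFun_mono σ h

end AuxStmt14

/-- for every finite Boolean algebra `B`, `(B, Aut(B))` is an MV-pair. -/
theorem stmt14 {α : Type*} [BooleanAlgebra α] [Fintype α] :
    MVP1 (⊤ : Subgroup (α ≃o α)) ∧ MVP2 (⊤ : Subgroup (α ≃o α)) := by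
  classical
  constructor
  · -- MVP1
    intro a b f _ hab hfab
    let fatom : {p : α // IsAtom p} ≃ {p : α // IsAtom p} :=
      { toFun := fun p => ⟨f p, (f.isAtom_iff p).2 p.2⟩
        invFun := fun q => ⟨f.symm q, (f.symm.isAtom_iff (q : α)).2 q.2⟩
        left_inv := fun p => Subtype.ext (f.symm_apply_apply p)
        right_inv := fun q => Subtype.ext (f.apply_symm_apply q) }
    set A := atomsBelow a with hA
    set T := atomsBelow (f a) with hTdef
    have hT : T = A.map fatom.toEmbedding := by
      ext q
      rw [Finset.mem_map_equiv, hTdef, hA, mem_atomsBelow, mem_atomsBelow]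
      show (q : α) ≤ f a ↔ f.symm (q : α) ≤ a
      exact (f.symm_apply_le).symm
    have hcard : A.card = T.card := by rw [hT, Finset.card_map]
    obtain ⟨σ, h1, h2⟩ := exists_perm_aux (A \ T).card A T rfl hcard
    have himg : A.image σ = T := by
      refine Finset.eq_of_subset_of_card_le (fun z hz => ?_) ?_
      · obtain ⟨w, hw, hwe⟩ := Finset.mem_image.1 hz
        exact hwe ▸ h1 w hw
      · rw [Finset.card_image_of_injective _ σ.injective, hcard]
    have hmemT : ∀ x, σ x ∈ T ↔ x ∈ A := by
      intro x
      rw [← himg]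
      constructor
      · intro hx
        obtain ⟨w, hw, hwe⟩ := Finset.mem_image.1 hx
        rwa [← σ.injective hwe]
      · intro hx; exact Finset.mem_image_of_mem _ hx
    have hU1 : ∀ x ∈ A ∪ T, σ x ∈ A ∪ T := by
      intro x hx
      by_contra hc
      have he : σ (σ x) = σ x :=
        h2 (σ x) (fun h => hc (Finset.mem_union_left _ h))
          (fun h => hc (Finset.mem_union_right _ h))
      have : σ x = x := σ.injective he
      exact hc (by rw [this]; exact hx)
    have himgU : (A ∪ T).image σ = A ∪ T := by
      refine Finset.eq_of_subset_of_card_le (fun z hz => ?_) ?_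
      · obtain ⟨w, hw, hwe⟩ := Finset.mem_image.1 hz
        exact hwe ▸ hU1 w hw
      · rw [Finset.card_image_of_injective _ σ.injective]
    have hmemU : ∀ x, σ x ∈ A ∪ T ↔ x ∈ A ∪ T := by
      intro x
      constructor
      · intro hx
        rw [← himgU] at hx
        obtain ⟨w, hw, hwe⟩ := Finset.mem_image.1 hx
        rwa [← σ.injective hwe]
      · intro hx
        rw [← himgU]
        exact Finset.mem_image_of_mem _ hx
    have hUb : ∀ r : {p : α // IsAtom p}, r ∈ A ∪ T → (r : α) ≤ b := by
      intro r hr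
      rcases Finset.mem_union.1 hr with hr | hr
      · exact (mem_atomsBelow.1 hr).trans hab
      · exact (mem_atomsBelow.1 hr).trans hfab
    refine ⟨permIso σ, Subgroup.mem_top _, ?_, ?_⟩
    · refine eq_of_atoms' fun q => ?_
      show (q : α) ≤ hFun σ a ↔ (q : α) ≤ f a
      rw [atom_le_hFun, ← mem_atomsBelow, ← mem_atomsBelow, ← hA, ← hTdef,
        ← hmemT (σ⁻¹ q), (show ∀ y, σ (σ⁻¹ y) = y from σ.apply_symm_apply)]
    · refine eq_of_atoms' fun q => ?_
      show (q : α) ≤ hFun σ b ↔ (q : α) ≤ b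
      rw [atom_le_hFun]
      by_cases hq : σ⁻¹ q ∈ A ∪ T
      · have hqU : q ∈ A ∪ T := by
          have := (hmemU (σ⁻¹ q)).2 hq
          rwa [(show ∀ y, σ (σ⁻¹ y) = y from σ.apply_symm_apply)] at this
        exact ⟨fun _ => hUb q hqU, fun _ => hUb _ hq⟩
      · have he : σ (σ⁻¹ q) = σ⁻¹ q :=
          h2 _ (fun h => hq (Finset.mem_union_left _ h))
            (fun h => hq (Finset.mem_union_right _ h))
        rw [(show ∀ y, σ (σ⁻¹ y) = y from σ.apply_symm_apply)] at he
        rw [← he]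
  · -- MVP2
    intro a b x hx
    obtain ⟨m, hm, hmax⟩ := Set.Finite.exists_maximalFor id
      {y | y ∈ Lset (⊤ : Subgroup (α ≃o α)) a b ∧ x ≤ y} (Set.toFinite _) ⟨x, hx, le_rfl⟩
    exact ⟨m, hm.1, hm.2, fun y hy hmy => le_antisymm (hmax ⟨hy, hm.2.trans hmy⟩ hmy) hmy⟩
end

section
/- Let B be the Boolean algebra with exactly three atoms a₁, a₂, a₃, let f be the automorphism induced by the cyclic permutation a₁ ↦ a₂ ↦ a₃ ↦ a₁, and let G = {id, f, f²}. Then (B, G) is not an MV-pair: condition (MVP1) fails for a = a₁, b = a₃ᶜ. -/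
/-! Every element of the cyclic group generated by `f` is a translation `X ↦ X + t` of
`Fin 3`. Such an `h` with `h {0} = f {0}` must have `t = 1`, while `h {2}ᶜ = {2}ᶜ`, i.e.
`h {2} = {2}`, forces `t = 0`. -/

section Translation

variable {A : Type*} [AddCommGroup A]

def translationHom : Multiplicative A →* (Set A ≃o Set A) where
  toFun a := (Equiv.addRight a.toAdd).toOrderIsoSet
  map_one' := by ext X x; simp
  map_mul' a b := by ext X x; simp [add_assoc, add_comm]

theorem translationHom_singleton (a : Multiplicative A) (x : A) :
    translationHom a {x} = {x + a.toAdd} := Set.image_singleton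

end Translation

/-- for the Boolean algebra with three atoms `{0}, {1}, {2}` and the cyclic
group `G = {id, f, f²}` generated by the automorphism `f` induced by the cyclic
permutation of atoms, `(B, G)` is not an MV-pair: (MVP1) fails for `a = a₁ = {0}` and
`b = a₃ᶜ = {2}ᶜ`. -/
theorem stmt15 (f : Set (Fin 3) ≃o Set (Fin 3))
    (hf : ∀ X : Set (Fin 3), f X = (· + 1) '' X) :
    ({0} : Set (Fin 3)) ≤ ({2} : Set (Fin 3))ᶜ ∧
    f ({0} : Set (Fin 3)) ≤ ({2} : Set (Fin 3))ᶜ ∧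
    ¬ ∃ h ∈ Subgroup.zpowers f,
        h ({0} : Set (Fin 3)) = f ({0} : Set (Fin 3)) ∧
        h (({2} : Set (Fin 3))ᶜ) = ({2} : Set (Fin 3))ᶜ := by
  obtain rfl : f = translationHom (.ofAdd 1) := OrderIso.ext (funext hf)
  refine ⟨by simp, by simp [translationHom_singleton], ?_⟩
  rintro ⟨h, hh, h0, h2⟩
  obtain ⟨t, rfl⟩ : h ∈ (translationHom : Multiplicative (Fin 3) →* _).range :=
    Subgroup.zpowers_le.mpr (MonoidHom.mem_range.mpr ⟨_, rfl⟩) hh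
  rw [translationHom_singleton, translationHom_singleton,
    Set.singleton_eq_singleton_iff, add_left_cancel_iff] at h0
  rw [map_compl, translationHom_singleton, compl_inj_iff, Set.singleton_eq_singleton_iff,
    add_eq_left] at h2
  simp [h0] at h2
end

section
/- Let B = P(ℤ) be the power set Boolean algebra of the integers and G = Aut(B). Then (B, G) does not satisfy (MVP1): taking A = B = ℕ and f the automorphism induced by the shift n ↦ n+1, there is no h ∈ Aut(P(ℤ)) with h(A) = f(A) = ℕ \ {0} and h(B) = B = ℕ. -/
/-- `(P(ℤ), Aut(P(ℤ)))` does not satisfy (MVP1): with `A = B = ℕ ⊆ ℤ` and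
`f` the shift automorphism, `A ⊆ B` and `f(A) ⊆ B`, but no automorphism `h` satisfies
`h(A) = f(A)` and `h(B) = B`. -/
theorem stmt16 (f : Set ℤ ≃o Set ℤ)
    (hf : ∀ X : Set ℤ, f X = (· + 1) '' X) :
    let N : Set ℤ := {n : ℤ | 0 ≤ n}
    N ≤ N ∧ f N ≤ N ∧
    ¬ ∃ h : Set ℤ ≃o Set ℤ, h N = f N ∧ h N = N := by
  intro N
  have hfN : f N = Set.Ici 1 := by
    rw [hf]
    exact Set.image_add_const_Ici (1 : ℤ) 0
  refine ⟨le_rfl, hfN ▸ Set.Ici_subset_Ici.mpr zero_le_one, ?_⟩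
  rintro ⟨h, hA, hB⟩
  -- Since `A = B`, the two conditions on `h` force the shift to fix `ℕ`.
  have hfix : (Set.Ici 1 : Set ℤ) = Set.Ici 0 := hfN ▸ hA ▸ hB
  exact one_ne_zero (Set.Ici_inj.mp hfix)
end

section
/- Let D be a bounded distributive lattice and B(D) the Boolean algebra R-generated by D. Then every element x ∈ B(D) admits a representation x = x₁ + x₂ + ⋯ + x_{2k} (symmetric difference in the Boolean ring) for some finite chain x₁ ≤ x₂ ≤ ⋯ ≤ x_{2k} in D, and for such a representation x = (x₂ \ x₁) ∨ (x₄ \ x₃) ∨ ⋯ ∨ (x_{2k} \ x_{2k-1}), where the joined terms are pairwise disjoint. -/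
namespace Stmt17Aux

open scoped symmDiff

variable {α : Type*} [BooleanAlgebra α]

def foldΔ (l : List α) : α := l.foldr (fun a b => symmDiff a b) ⊥

@[simp] lemma foldΔ_nil : foldΔ ([] : List α) = ⊥ := rfl
@[simp] lemma foldΔ_cons (a : α) (l : List α) : foldΔ (a :: l) = a ∆ foldΔ l := rfl

lemma foldΔ_append (l m : List α) : foldΔ (l ++ m) = foldΔ l ∆ foldΔ m := by
  induction l with
  | nil => simp
  | cons a t ih => simp [ih, symmDiff_assoc]

lemma inf_symmDiff_sup (a b : α) : (a ⊓ b) ∆ (a ⊔ b) = a ∆ b := by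
  rw [symmDiff_eq_sup_sdiff_inf (a := a ⊓ b), symmDiff_eq_sup_sdiff_inf (a := a) (b := b)]
  congr 1
  · simp [sup_eq_right.2 inf_le_sup]
  · simp [inf_eq_left.2 inf_le_sup]

lemma symmDiff_of_le' {a b : α} (h : a ≤ b) : a ∆ b = b \ a := by
  rw [symmDiff_eq_sup_sdiff_inf, sup_eq_right.2 h, inf_eq_left.2 h]

/-- insert an element into a chain via min/max comparators -/
def ins (b : α) : List α → List α
  | [] => [b]
  | a :: t => (a ⊓ b) :: ins (a ⊔ b) t

lemma ins_length (b : α) (l : List α) : (ins b l).length = l.length + 1 := by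
  induction l generalizing b with
  | nil => rfl
  | cons a t ih => simp [ins, ih]

lemma foldΔ_ins (b : α) (l : List α) : foldΔ (ins b l) = b ∆ foldΔ l := by
  induction l generalizing b with
  | nil => simp [ins]
  | cons a t ih =>
    simp only [ins, foldΔ_cons, ih]
    rw [← symmDiff_assoc, ← symmDiff_assoc, inf_symmDiff_sup, symmDiff_comm a b]

lemma le_ins {c b : α} {l : List α} (hcb : c ≤ b) (hcl : ∀ a ∈ l, c ≤ a) :
    ∀ a ∈ ins b l, c ≤ a := by
  induction l generalizing b with
  | nil =>
    intro a ha
    simp only [ins, List.mem_singleton] at ha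
    subst ha; exact hcb
  | cons a t ih =>
    intro x hx
    simp only [ins, List.mem_cons] at hx
    rcases hx with rfl | hx
    · exact le_inf (hcl a (List.mem_cons_self)) hcb
    · exact ih (hcb.trans le_sup_right) (fun y hy => hcl y (List.mem_cons_of_mem _ hy)) x hx

lemma sorted_ins {b : α} {l : List α} (hl : l.Pairwise (· ≤ ·)) :
    (ins b l).Pairwise (· ≤ ·) := by
  induction l generalizing b with
  | nil => simp [ins]
  | cons a t ih =>
    rw [List.pairwise_cons] at hl
    simp only [ins, List.pairwise_cons]
    exact ⟨le_ins inf_le_sup (fun y hy => inf_le_left.trans (hl.1 y hy)), ih hl.2⟩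

lemma ins_mem {L : Set α}
    (hinf : ∀ a ∈ L, ∀ b ∈ L, a ⊓ b ∈ L) (hsup : ∀ a ∈ L, ∀ b ∈ L, a ⊔ b ∈ L)
    {b : α} {l : List α} (hb : b ∈ L) (hl : ∀ a ∈ l, a ∈ L) :
    ∀ a ∈ ins b l, a ∈ L := by
  induction l generalizing b with
  | nil =>
    intro a ha; simp only [ins, List.mem_singleton] at ha; subst ha; exact hb
  | cons a t ih =>
    intro x hx
    simp only [ins, List.mem_cons] at hx
    rcases hx with rfl | hx
    · exact hinf a (hl a (List.mem_cons_self)) b hb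
    · exact ih (hsup a (hl a (List.mem_cons_self)) b hb)
        (fun y hy => hl y (List.mem_cons_of_mem _ hy)) x hx

/-- insertion sort via lattice comparators -/
def srt : List α → List α
  | [] => []
  | a :: t => ins a (srt t)

lemma srt_length (l : List α) : (srt l).length = l.length := by
  induction l with
  | nil => rfl
  | cons a t ih => simp [srt, ins_length, ih]

lemma foldΔ_srt (l : List α) : foldΔ (srt l) = foldΔ l := by
  induction l with
  | nil => rfl
  | cons a t ih => simp [srt, foldΔ_ins, ih]

lemma sorted_srt (l : List α) : (srt l).Pairwise (· ≤ ·) := by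
  induction l with
  | nil => simp [srt]
  | cons a t ih => exact sorted_ins ih

lemma srt_mem {L : Set α}
    (hinf : ∀ a ∈ L, ∀ b ∈ L, a ⊓ b ∈ L) (hsup : ∀ a ∈ L, ∀ b ∈ L, a ⊔ b ∈ L)
    {l : List α} (hl : ∀ a ∈ l, a ∈ L) : ∀ a ∈ srt l, a ∈ L := by
  induction l with
  | nil => simp [srt]
  | cons a t ih =>
    exact ins_mem hinf hsup (hl a (List.mem_cons_self))
      (ih (fun y hy => hl y (List.mem_cons_of_mem _ hy)))

lemma foldΔ_map_inf (w : α) (l : List α) :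
    foldΔ (l.map (fun a => w ⊓ a)) = w ⊓ foldΔ l := by
  induction l with
  | nil => simp
  | cons a t ih => simp [ih, inf_symmDiff_distrib_left]

lemma sup_univ_succ {k : ℕ} (f : Fin (k + 1) → α) :
    Finset.univ.sup f = f 0 ⊔ Finset.univ.sup (f ∘ Fin.succ) := by
  rw [Fin.univ_succ, Finset.sup_cons, Finset.sup_map]
  rfl

lemma key_lt1 (k : ℕ) (i : Fin k) : 2 * (i : ℕ) + 1 < 2 * k := by have := i.isLt; omega

lemma key_lt0 (k : ℕ) (i : Fin k) : 2 * (i : ℕ) < 2 * k := by have := i.isLt; omega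

/-- Key lemma: the symmetric-difference fold of a monotone even chain is the sup of
consecutive differences, and it is disjoint from any lower bound of the chain. -/
lemma key : ∀ (k : ℕ) (c : Fin (2 * k) → α), Monotone c →
    foldΔ (List.ofFn c) = Finset.univ.sup (fun i : Fin k =>
        c ⟨2 * i + 1, key_lt1 k i⟩ \ c ⟨2 * i, key_lt0 k i⟩) ∧
    ∀ b : α, (∀ i, b ≤ c i) → Disjoint b (foldΔ (List.ofFn c)) := by
  intro k
  induction k with
  | zero =>
    intro c _
    have h0 : List.ofFn c = [] := by
      apply List.eq_nil_of_length_eq_zero; simp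
    constructor
    · rw [h0]; simp
    · intro b _; rw [h0]; simp
  | succ k ih =>
    intro c hc
    have h1 : List.ofFn c = c 0 :: List.ofFn (fun i : Fin (2 * k + 1) => c i.succ) :=
      List.ofFn_succ (n := 2 * k + 1) (f := c)
    have h2 : List.ofFn (fun i : Fin (2 * k + 1) => c i.succ)
        = c (0 : Fin (2 * k + 1)).succ :: List.ofFn (fun i : Fin (2 * k) => c i.succ.succ) :=
      List.ofFn_succ (n := 2 * k) (f := fun i : Fin (2 * k + 1) => c i.succ)
    set e : Fin (2 * k) → α := fun i => c i.succ.succ with he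
    have hemono : Monotone e := by
      intro i j hij
      apply hc
      rw [Fin.le_def] at hij ⊢
      simp only [Fin.val_succ]
      omega
    obtain ⟨ihsup, ihdisj⟩ := ih e hemono
    have hble : ∀ i : Fin (2 * k), c (0 : Fin (2 * k + 1)).succ ≤ e i := by
      intro i
      apply hc
      simp only [Fin.le_def, Fin.val_succ, Fin.val_zero]
      omega
    have hd1 : Disjoint (c (0 : Fin (2 * k + 1)).succ) (foldΔ (List.ofFn e)) :=
      ihdisj _ hble
    have h01 : c 0 ≤ c (0 : Fin (2 * k + 1)).succ := by
      apply hc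
      simp [Fin.le_def]
    have hd0 : Disjoint (c 0) (foldΔ (List.ofFn e)) :=
      ihdisj _ (fun i => h01.trans (hble i))
    have hfold : foldΔ (List.ofFn c)
        = (c (0 : Fin (2 * k + 1)).succ \ c 0) ⊔ foldΔ (List.ofFn e) := by
      rw [h1, h2, foldΔ_cons, foldΔ_cons, hd1.symmDiff_eq_sup,
        symmDiff_of_le' (h01.trans le_sup_left), sup_sdiff, hd0.symm.sdiff_eq_left]
    constructor
    · rw [hfold, ihsup, sup_univ_succ]
      refine congrArg₂ (· ⊔ ·) ?_ ?_
      · show _ = c _ \ c _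
        congr 1
      · apply Finset.sup_congr rfl
        intro i _
        show e ⟨2 * (i : ℕ) + 1, _⟩ \ e ⟨2 * (i : ℕ), _⟩ = _
        congr 1
    · intro b hb
      rw [hfold]
      refine Disjoint.sup_right ?_ (ihdisj b (fun i => hb _))
      exact (disjoint_sdiff_self_left.mono_right (hb 0)).symm

end Stmt17Aux

open Stmt17Aux in
/-- in the Boolean algebra R-generated by a bounded (distributive)
sublattice `L`, every element has a chain representation `x = x₁ + ⋯ + x_{2k}` with
`x₁ ≤ ⋯ ≤ x_{2k}` in `L` (where `+` is symmetric difference), and for any such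
representation `x` is the disjoint join of the differences `x_{2i} \ x_{2i-1}`. -/
theorem stmt17 {α : Type*} [BooleanAlgebra α] (L : Set α)
    (hbot : ⊥ ∈ L) (htop : ⊤ ∈ L)
    (hinf : ∀ a ∈ L, ∀ b ∈ L, a ⊓ b ∈ L) (hsup : ∀ a ∈ L, ∀ b ∈ L, a ⊔ b ∈ L)
    -- L generates α as a Boolean algebra:
    (hgen : ∀ S : Set α, L ⊆ S → (∀ a ∈ S, aᶜ ∈ S) →
      (∀ a ∈ S, ∀ b ∈ S, a ⊓ b ∈ S) → (∀ a ∈ S, ∀ b ∈ S, a ⊔ b ∈ S) → S = Set.univ)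
    (x : α) :
    (∃ (k : ℕ) (c : Fin (2 * k) → α), Monotone c ∧ (∀ i, c i ∈ L) ∧
      x = (List.ofFn c).foldr (fun a b => symmDiff a b) ⊥) ∧
    (∀ (k : ℕ) (c : Fin (2 * k) → α), Monotone c → (∀ i, c i ∈ L) →
      x = (List.ofFn c).foldr (fun a b => symmDiff a b) ⊥ →
      x = Finset.univ.sup (fun i : Fin k =>
            c ⟨2 * i + 1, by have := i.isLt; omega⟩ \ c ⟨2 * i, by have := i.isLt; omega⟩) ∧
      ∀ i j : Fin k, i ≠ j →
        Disjoint
          (c ⟨2 * i + 1, by have := i.isLt; omega⟩ \ c ⟨2 * i, by have := i.isLt; omega⟩)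
          (c ⟨2 * j + 1, by have := j.isLt; omega⟩ \ c ⟨2 * j, by have := j.isLt; omega⟩)) := by
  open scoped symmDiff in
  constructor
  · -- existence
    set S' : Set α := {y : α | ∃ l : List α, (∀ a ∈ l, a ∈ L) ∧ y = foldΔ l} with hS'
    have hΔ : ∀ y ∈ S', ∀ z ∈ S', y ∆ z ∈ S' := by
      rintro y ⟨l, hl, rfl⟩ z ⟨m, hm, rfl⟩
      refine ⟨l ++ m, ?_, (foldΔ_append l m).symm⟩
      intro a ha
      rcases List.mem_append.1 ha with h | h
      · exact hl a h
      · exact hm a h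
    have hsub : L ⊆ S' := by
      intro a ha
      exact ⟨[a], by simpa using ha, by simp⟩
    have htopS : (⊤ : α) ∈ S' := hsub htop
    have hcompl : ∀ a ∈ S', aᶜ ∈ S' := by
      intro a ha
      have := hΔ a ha ⊤ htopS
      rwa [symmDiff_top] at this
    have hmapinf : ∀ w ∈ L, ∀ y ∈ S', w ⊓ y ∈ S' := by
      rintro w hw y ⟨m, hm, rfl⟩
      refine ⟨m.map (fun a => w ⊓ a), ?_, (foldΔ_map_inf w m).symm⟩
      intro a ha
      obtain ⟨b, hb, rfl⟩ := List.mem_map.1 ha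
      exact hinf w hw b (hm b hb)
    have hbotS : (⊥ : α) ∈ S' := ⟨[], by simp, rfl⟩
    have hinfS : ∀ a ∈ S', ∀ b ∈ S', a ⊓ b ∈ S' := by
      have H : ∀ l : List α, (∀ a ∈ l, a ∈ L) → ∀ y ∈ S', foldΔ l ⊓ y ∈ S' := by
        intro l
        induction l with
        | nil =>
          intro _ y _
          simpa using hbotS
        | cons a t ih =>
          intro hl y hy
          rw [foldΔ_cons, inf_symmDiff_distrib_right]
          exact hΔ _ (hmapinf a (hl a (List.mem_cons_self)) y hy)
            _ (ih (fun b hb => hl b (List.mem_cons_of_mem _ hb)) y hy)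
      rintro a ⟨l, hl, rfl⟩ b hb
      exact H l hl b hb
    have hsupS : ∀ a ∈ S', ∀ b ∈ S', a ⊔ b ∈ S' := by
      intro a ha b hb
      rw [← symmDiff_symmDiff_inf a b]
      exact hΔ _ (hΔ a ha b hb) _ (hinfS a ha b hb)
    have hx : x ∈ S' := by
      rw [hgen S' hsub hcompl hinfS hsupS]
      trivial
    obtain ⟨l, hl, hxl⟩ := hx
    -- sort and fix parity
    set m : List α := if Even l.length then srt l else ⊥ :: srt l with hm
    have hmsorted : m.Pairwise (· ≤ ·) := by
      rw [hm]
      split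
      · exact sorted_srt l
      · rw [List.pairwise_cons]
        exact ⟨fun b _ => bot_le, sorted_srt l⟩
    have hmfold : foldΔ m = x := by
      rw [hm]
      split
      · rw [foldΔ_srt, hxl]
      · rw [foldΔ_cons, foldΔ_srt, hxl, bot_symmDiff]
    have hmmem : ∀ a ∈ m, a ∈ L := by
      rw [hm]
      split
      · exact srt_mem hinf hsup hl
      · intro a ha
        rcases List.mem_cons.1 ha with rfl | ha
        · exact hbot
        · exact srt_mem hinf hsup hl a ha
    have hmeven : Even m.length := by
      rw [hm]
      split
      · rwa [srt_length]
      · rename_i h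
        simp only [List.length_cons, srt_length]
        rcases Nat.even_or_odd l.length with he | ho
        · exact absurd he h
        · exact ho.add_one
    obtain ⟨k, hk⟩ := hmeven
    have hlen : m.length = 2 * k := by omega
    refine ⟨k, fun i => m.get (Fin.cast hlen.symm i), ?_, ?_, ?_⟩
    · intro i j hij
      rcases eq_or_lt_of_le hij with h | h
      · exact h ▸ le_rfl
      · show m.get _ ≤ m.get _
        apply hmsorted.rel_get_of_lt
        rw [Fin.lt_def]
        simpa [Fin.coe_cast] using h
    · intro i
      show m.get _ ∈ L
      exact hmmem _ (List.get_mem m _)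
    · have : List.ofFn (fun i : Fin (2 * k) => m.get (Fin.cast hlen.symm i)) = m := by
        apply List.ext_get
        · simp [hlen]
        · intro n h1 h2
          simp [List.get_ofFn]
      show x = foldΔ _
      rw [this, hmfold]
  · -- the formula for any representation
    intro k c hmono hmem hrep
    constructor
    · rw [hrep]
      exact (key k c hmono).1
    · intro i j hij
      rcases Ne.lt_or_gt hij with h | h
      · have hle : c ⟨2 * (i : ℕ) + 1, by have := i.isLt; omega⟩
            ≤ c ⟨2 * (j : ℕ), by have := j.isLt; omega⟩ := by
          apply hmono
          rw [Fin.le_def]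
          simp only []
          have : (i : ℕ) < (j : ℕ) := h
          omega
        exact (disjoint_sdiff_self_left.mono_right (sdiff_le.trans hle)).symm
      · have hle : c ⟨2 * (j : ℕ) + 1, by have := j.isLt; omega⟩
            ≤ c ⟨2 * (i : ℕ), by have := i.isLt; omega⟩ := by
          apply hmono
          rw [Fin.le_def]
          simp only []
          have : (j : ℕ) < (i : ℕ) := h
          omega
        exact disjoint_sdiff_self_left.mono_right (sdiff_le.trans hle)
end
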